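/- arXiv:1608.02440 — 7 statements merged into one kernel-verified Lean document; each statement's English description precedes it below -/
import Mathlib

section
/- Let m ≥ 1 and S ≥ 1 be integers and let X_0, X_1, …, X_m be random variables on a common probability space, each taking values in {0,1} (not necessarily independent). Then ∏_{i=0}^{m} P(X_i = 0)^S ≤ P(X_i = 0 for all i = 0,…,m) + (m/(m+1))^{(m+1)S}. -/
/-!
Write `q i = P(X_i = 0)`, `q̄` for their mean and `c = m/(m+1)`. By AM–GM,
`∏ q_i^S ≤ q̄^((m+1)S)`, which settles the case `q̄ ≤ c`. For `q̄ ≥ c`, convexity of `t ↦ t^n`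
on `[c, 1]` bounds `q̄^n` by `c^n + (q̄ - c)/(1 - c)`, and `(q̄ - c)/(1 - c) = 1 - ∑ (1 - q_i)`
is at most `P(∀ i, X_i = 0)` by the union bound applied to the events `X_i = 1`.
-/

open MeasureTheory Finset

theorem pow_le_pow_add_div_one_sub (n : ℕ) {c t : ℝ} (hc : 0 ≤ c) (hc1 : c < 1)
    (hct : c ≤ t) (ht : t ≤ 1) : t ^ n ≤ c ^ n + (t - c) / (1 - c) := by
  have hc1' : 1 - c ≠ 0 := by linarith
  set l := (t - c) / (1 - c)
  have hl0 : 0 ≤ l := div_nonneg (by linarith) (by linarith)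
  have hl1 : l ≤ 1 := (div_le_one (by linarith)).2 (by linarith)
  have hchord : t ^ n ≤ (1 - l) * c ^ n + l := by
    have hcomb : (1 - l) * c + l = t := by
      simp only [l]; field_simp; ring
    simpa only [smul_eq_mul, mul_one, one_pow, hcomb] using
      (convexOn_pow n).2 (Set.mem_Ici.2 hc) (Set.mem_Ici.2 zero_le_one) (by linarith) hl0
        (sub_add_cancel 1 l)
  have : 0 ≤ l * c ^ n := mul_nonneg hl0 (pow_nonneg hc n)
  linarith

theorem Real.prod_le_arith_mean_pow_card {ι : Type*} (s : Finset ι) {z : ι → ℝ}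
    (hz : ∀ i ∈ s, 0 ≤ z i) : ∏ i ∈ s, z i ≤ ((∑ i ∈ s, z i) / #s) ^ #s := by
  rcases s.eq_empty_or_nonempty with rfl | hs
  · simp
  have hcard : (0 : ℝ) < #s := by exact_mod_cast hs.card_pos
  have hprod : 0 ≤ ∏ i ∈ s, z i := prod_nonneg hz
  have hmean := Real.geom_mean_le_arith_mean s (fun _ ↦ 1) z (fun _ _ ↦ zero_le_one)
    (by simpa using hcard) hz
  simp only [Real.rpow_one, one_mul, sum_const, nsmul_eq_mul, mul_one] at hmean
  calc ∏ i ∈ s, z i = ((∏ i ∈ s, z i) ^ (#s : ℝ)⁻¹) ^ #s := by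
        rw [← Real.rpow_natCast, ← Real.rpow_mul hprod, inv_mul_cancel₀ hcard.ne', Real.rpow_one]
    _ ≤ _ := pow_le_pow_left₀ (by positivity) hmean _

theorem prod_pow_le_add_pow {ι : Type*} [Fintype ι] {m : ℕ} (hι : Fintype.card ι = m + 1)
    (S : ℕ) {q : ι → ℝ} (hq0 : ∀ i, 0 ≤ q i) (hq1 : ∀ i, q i ≤ 1) {r : ℝ} (hr0 : 0 ≤ r)
    (hr : 1 - ∑ i, (1 - q i) ≤ r) :
    ∏ i, q i ^ S ≤ r + ((m : ℝ) / (m + 1)) ^ ((m + 1) * S) := by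
  have hm : (0 : ℝ) < m + 1 := by positivity
  set c : ℝ := m / (m + 1)
  set t : ℝ := (∑ i, q i) / (m + 1)
  have hc0 : 0 ≤ c := by positivity
  have hc1 : c < 1 := (div_lt_one hm).2 (by linarith)
  have ht0 : 0 ≤ t := div_nonneg (sum_nonneg fun i _ ↦ hq0 i) hm.le
  have ht1 : t ≤ 1 := by
    rw [div_le_one hm]
    calc ∑ i, q i ≤ ∑ _i : ι, (1 : ℝ) := sum_le_sum fun i _ ↦ hq1 i
      _ = m + 1 := by simp [hι]
  have hamgm : ∏ i, q i ^ S ≤ t ^ ((m + 1) * S) := by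
    rw [prod_pow, pow_mul]
    gcongr
    · exact prod_nonneg fun i _ ↦ hq0 i
    · simpa [hι] using Real.prod_le_arith_mean_pow_card univ fun i _ ↦ hq0 i
  rcases le_total t c with htc | hct
  · calc ∏ i, q i ^ S ≤ t ^ ((m + 1) * S) := hamgm
      _ ≤ c ^ ((m + 1) * S) := pow_le_pow_left₀ ht0 htc _
      _ ≤ r + c ^ ((m + 1) * S) := le_add_of_nonneg_left hr0
  · have hslope : (t - c) / (1 - c) = 1 - ∑ i, (1 - q i) := by
      simp only [t, c, sum_sub_distrib, sum_const, card_univ, hι]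
      field_simp
      ring
    calc ∏ i, q i ^ S ≤ t ^ ((m + 1) * S) := hamgm
      _ ≤ c ^ ((m + 1) * S) + (t - c) / (1 - c) :=
        pow_le_pow_add_div_one_sub _ hc0 hc1 hct ht1
      _ ≤ r + c ^ ((m + 1) * S) := by linarith

theorem one_sub_sum_le_measureReal_iInter {Ω ι : Type*} [MeasurableSpace Ω] [Fintype ι]
    (μ : Measure Ω) [IsProbabilityMeasure μ] {A : ι → Set Ω} (hA : ∀ i, MeasurableSet (A i)) :
    1 - ∑ i, (1 - μ.real (A i)) ≤ μ.real (⋂ i, A i) := by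
  have hcover : (⋂ i, A i) ∪ ⋃ i, (A i)ᶜ = Set.univ := by
    rw [← Set.compl_iInter, Set.union_compl_self]
  calc 1 - ∑ i, (1 - μ.real (A i)) = μ.real Set.univ - ∑ i, μ.real (A i)ᶜ := by
        simp [measureReal_compl (hA _)]
    _ ≤ μ.real (⋂ i, A i) := by
        rw [← hcover, sub_le_iff_le_add]
        exact (measureReal_union_le _ _).trans (by gcongr; exact measureReal_iUnion_fintype_le _)

theorem lemma_4_7_general {Ω : Type*} [MeasurableSpace Ω] (P : Measure Ω) [IsProbabilityMeasure P]
    (m S : ℕ)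
    (X : Fin (m + 1) → Ω → Bool) (hX : ∀ i, Measurable (X i)) :
    ∏ i : Fin (m + 1), (P {ω | X i ω = false}) ^ S
      ≤ P {ω | ∀ i, X i ω = false} + ((m : ENNReal) / (m + 1)) ^ ((m + 1) * S) := by
  have hA : ∀ i, MeasurableSet {ω | X i ω = false} := fun i ↦ hX i (measurableSet_singleton _)
  have key := prod_pow_le_add_pow (Fintype.card_fin _) S (fun _ ↦ measureReal_nonneg)
    (fun _ ↦ measureReal_le_one) measureReal_nonneg (one_sub_sum_le_measureReal_iInter P hA)
  rw [Set.ofPred_forall, ← ENNReal.toReal_le_toReal (ENNReal.prod_ne_top fun _ _ ↦ by finiteness)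
    (by finiteness), ENNReal.toReal_add (by finiteness) (by finiteness)]
  simpa [ENNReal.toReal_prod, ENNReal.toReal_div, ENNReal.toReal_add, measureReal_def] using key

/-- Lemma 4.7: for `{0,1}`-valued random variables `X_0, …, X_m` (not necessarily
independent) on a probability space, `∏ i P(X_i = 0)^S ≤ P(∀ i, X_i = 0) + (m/(m+1))^((m+1)S)`. -/
theorem lemma_4_7 {Ω : Type*} [MeasurableSpace Ω] (P : Measure Ω) [IsProbabilityMeasure P]
    (m S : ℕ) (hm : 1 ≤ m) (hS : 1 ≤ S)
    (X : Fin (m + 1) → Ω → Bool) (hX : ∀ i, Measurable (X i)) :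
    ∏ i : Fin (m + 1), (P {ω | X i ω = false}) ^ S
      ≤ P {ω | ∀ i, X i ω = false} + ((m : ENNReal) / (m + 1)) ^ ((m + 1) * S) :=
  lemma_4_7_general P m S X hX
end

section
/- Let m ≥ 1 and S ≥ 1 be integers and let (p_I)_{I ⊆ {0,…,m}} be nonnegative reals indexed by the subsets of {0,…,m} with ∑_{I ⊆ {0,…,m}} p_I = 1. Then ∏_{i=0}^{m} ( ∑_{I ⊆ {0,…,m}, i ∈ I} p_I )^S ≤ p_{{0,…,m}} + (m/(m+1))^{(m+1)S}, where p_{{0,…,m}} is the weight of the full set. -/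
/-!
Put `q i = ∑_{I ∋ i} p_I` and `t = p_{{0,…,m}}`. Double counting gives
`∑ i, q i = ∑ I, |I| p_I ≤ m + t`, since only the full set has more than `m` elements.
By AM-GM, `∏ i, q i ≤ ((m + t)/(m + 1))^(m + 1)`, and `(m + t)/(m + 1)` is the convex
combination `(1 - t) · m/(m + 1) + t · 1`, so convexity of `x ↦ x^N` on `[0, ∞)` bounds its
`N`-th power by `(1 - t) (m/(m + 1))^N + t`.
-/

open Finset

theorem Real.prod_le_sum_div_card_pow {ι : Type*} (s : Finset ι) (z : ι → ℝ)
    (hz : ∀ i ∈ s, 0 ≤ z i) : ∏ i ∈ s, z i ≤ ((∑ i ∈ s, z i) / #s) ^ #s := by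
  rcases s.eq_empty_or_nonempty with rfl | hs
  · simp
  have amgm := Real.geom_mean_le_arith_mean s (fun _ ↦ 1) z (fun _ _ ↦ zero_le_one)
    (by simpa using hs) hz
  simp only [Real.rpow_one, one_mul, sum_const, nsmul_eq_mul, mul_one] at amgm
  calc ∏ i ∈ s, z i = ((∏ i ∈ s, z i) ^ ((#s : ℝ)⁻¹)) ^ #s :=
        (Real.rpow_inv_natCast_pow (prod_nonneg hz) hs.card_pos.ne').symm
    _ ≤ ((∑ i ∈ s, z i) / #s) ^ #s :=
        pow_le_pow_left₀ (Real.rpow_nonneg (prod_nonneg hz) _) amgm _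

section DoubleCounting

variable {α : Type*} [Fintype α] [DecidableEq α]

theorem sum_sum_filter_mem_eq_sum_card_mul {R : Type*} [CommSemiring R] (p : Finset α → R) :
    ∑ i, ∑ I with i ∈ I, p I = ∑ I, (#I : R) * p I := by
  simp only [sum_filter]
  rw [sum_comm]
  refine sum_congr rfl fun I _ ↦ ?_
  rw [← sum_filter, filter_mem_eq_inter, univ_inter, sum_const, nsmul_eq_mul]

theorem sum_card_mul_le {R : Type*} [Semiring R] [PartialOrder R] [IsOrderedRing R]
    {n : ℕ} (hα : Fintype.card α = n + 1) (p : Finset α → R) (hp : ∀ I, 0 ≤ p I) :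
    ∑ I, (#I : R) * p I ≤ n * ∑ I, p I + p univ := by
  have termwise (I : Finset α) : (#I : R) * p I ≤ n * p I + if I = univ then p I else 0 := by
    by_cases hI : I = univ
    · simp [hI, hα, add_mul]
    · have hcard : #I ≤ n := by
        have := card_lt_card (ssubset_univ_iff.mpr hI)
        rw [card_univ, hα] at this
        omega
      simpa [hI] using mul_le_mul_of_nonneg_right (Nat.mono_cast hcard) (hp I)
  calc ∑ I, (#I : R) * p I ≤ ∑ I, (n * p I + if I = univ then p I else 0) :=
        sum_le_sum fun I _ ↦ termwise I
    _ = n * ∑ I, p I + p univ := by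
        rw [sum_add_distrib, ← mul_sum, sum_ite_eq' univ univ p, if_pos (mem_univ _)]

end DoubleCounting

theorem convex_combination_pow_le {a t : ℝ} (ha : 0 ≤ a) (ht₀ : 0 ≤ t) (ht₁ : t ≤ 1) (N : ℕ) :
    ((1 - t) * a + t) ^ N ≤ a ^ N + t := by
  have hconv := (convexOn_pow N).2 (Set.mem_Ici.mpr ha) (Set.mem_Ici.mpr zero_le_one)
    (sub_nonneg.mpr ht₁) ht₀ (sub_add_cancel 1 t)
  simp only [smul_eq_mul, mul_one, one_pow] at hconv
  nlinarith [pow_nonneg ha N]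

theorem ineq_4_12_general (m S : ℕ)
    (p : Finset (Fin (m + 1)) → ℝ) (hp : ∀ I, 0 ≤ p I)
    (hsum : ∑ I : Finset (Fin (m + 1)), p I = 1) :
    ∏ i : Fin (m + 1), (∑ I ∈ univ.filter (fun I : Finset (Fin (m + 1)) => i ∈ I), p I) ^ S
      ≤ p univ + ((m : ℝ) / (m + 1)) ^ ((m + 1) * S) := by
  set q : Fin (m + 1) → ℝ := fun i ↦ ∑ I with i ∈ I, p I
  have hq₀ (i : Fin (m + 1)) : 0 ≤ q i := sum_nonneg fun I _ ↦ hp I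
  set t := p univ
  have ht₁ : t ≤ 1 := hsum ▸ single_le_sum (fun I _ ↦ hp I) (mem_univ univ)
  have hq_sum : ∑ i, q i ≤ m + t := by
    simpa [q, sum_sum_filter_mem_eq_sum_card_mul, hsum] using
      sum_card_mul_le (Fintype.card_fin (m + 1)) p hp
  have hq_prod : ∏ i, q i ≤ ((1 - t) * (m / (m + 1)) + t) ^ (m + 1) := by
    have hsplit : (1 - t) * (m / (m + 1)) + t = (m + t) / (m + 1) := by field_simp; ring
    calc ∏ i, q i ≤ ((∑ i, q i) / (m + 1)) ^ (m + 1) := by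
          simpa using Real.prod_le_sum_div_card_pow univ q fun i _ ↦ hq₀ i
      _ ≤ _ := by
          rw [hsplit]
          gcongr
          exact div_nonneg (sum_nonneg fun i _ ↦ hq₀ i) (by positivity)
  calc ∏ i, q i ^ S = (∏ i, q i) ^ S := prod_pow _ _ _
    _ ≤ ((1 - t) * (m / (m + 1)) + t) ^ ((m + 1) * S) := by
        rw [pow_mul]
        exact pow_le_pow_left₀ (prod_nonneg fun i _ ↦ hq₀ i) hq_prod S
    _ ≤ t + ((m : ℝ) / (m + 1)) ^ ((m + 1) * S) := by
        rw [add_comm t]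
        exact convex_combination_pow_le (by positivity) (hp univ) ht₁ _

/-- Inequality (4.12): for nonnegative weights `p_I` indexed by subsets of `{0,…,m}`
summing to 1, `∏ i (∑_{I ∋ i} p_I)^S ≤ p_{{0,…,m}} + (m/(m+1))^((m+1)S)`. -/
theorem ineq_4_12 (m S : ℕ) (hm : 1 ≤ m) (hS : 1 ≤ S)
    (p : Finset (Fin (m + 1)) → ℝ) (hp : ∀ I, 0 ≤ p I)
    (hsum : ∑ I : Finset (Fin (m + 1)), p I = 1) :
    ∏ i : Fin (m + 1), (∑ I ∈ univ.filter (fun I : Finset (Fin (m + 1)) => i ∈ I), p I) ^ S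
      ≤ p univ + ((m : ℝ) / (m + 1)) ^ ((m + 1) * S) :=
  ineq_4_12_general m S p hp hsum
end

section
/- For all integers m ≥ 1 and S ≥ 1 and every real q ∈ [0,1], ((m+q)/(m+1))^{(m+1)S} ≤ q + (m/(m+1))^{(m+1)S}. -/
/-- Final inequality in the proof of Lemma 4.7:
`((m+q)/(m+1))^((m+1)S) ≤ q + (m/(m+1))^((m+1)S)` for `q ∈ [0,1]`. -/
theorem final_ineq (m S : ℕ) (hm : 1 ≤ m) (hS : 1 ≤ S)
    (q : ℝ) (hq0 : 0 ≤ q) (hq1 : q ≤ 1) :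
    (((m : ℝ) + q) / (m + 1)) ^ ((m + 1) * S) ≤ q + ((m : ℝ) / (m + 1)) ^ ((m + 1) * S) := by
  set n := (m + 1) * S with hn
  have hm1 : (0:ℝ) < (m:ℝ) + 1 := by positivity
  have hx : ((m:ℝ) / (m + 1)) ∈ Set.Ici (0:ℝ) := by
    simp only [Set.mem_Ici]; positivity
  have hy : (1:ℝ) ∈ Set.Ici (0:ℝ) := by norm_num
  have hconv := (convexOn_pow n).2 hx hy (by linarith : (0:ℝ) ≤ 1 - q) hq0
    (by ring : (1 - q) + q = 1)
  simp only [smul_eq_mul, one_pow, mul_one] at hconv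
  have key : (1 - q) * ((m:ℝ) / (m + 1)) + q = ((m:ℝ) + q) / (m + 1) := by
    field_simp; ring
  rw [key] at hconv
  have hpow : ((m:ℝ) / (m + 1)) ^ n ≤ 1 := by
    apply pow_le_one₀ (by positivity)
    rw [div_le_one hm1]; linarith
  calc (((m : ℝ) + q) / (m + 1)) ^ n ≤ (1 - q) * ((m:ℝ) / (m + 1)) ^ n + q := hconv
    _ ≤ q + ((m : ℝ) / (m + 1)) ^ n := by nlinarith [mul_nonneg hq0 (pow_nonneg hx n)]
end

section
/- Let m ∈ ℕ and let (p_I)_{I ⊆ {0,…,m}} be nonnegative reals indexed by the subsets of {0,…,m} with ∑_{I ⊆ {0,…,m}} p_I = 1. Then ∏_{i=0}^{m} ( ∑_{I ⊆ {0,…,m}, i ∈ I} p_I ) ≤ ((m + p_{{0,…,m}})/(m+1))^{m+1}, where p_{{0,…,m}} is the weight of the full set. -/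
open Finset

/-- Optimization step in the proof of Lemma 4.7: for nonnegative weights `p_I`
indexed by the subsets of `{0,…,m}` summing to 1,
`∏ i (∑_{I ∋ i} p_I) ≤ ((m + p_{{0,…,m}})/(m+1))^(m+1)`. -/
theorem optimization_step (m : ℕ)
    (p : Finset (Fin (m + 1)) → ℝ) (hp : ∀ I, 0 ≤ p I)
    (hsum : ∑ I : Finset (Fin (m + 1)), p I = 1) :
    ∏ i : Fin (m + 1), (∑ I ∈ univ.filter (fun I : Finset (Fin (m + 1)) => i ∈ I), p I)
      ≤ (((m : ℝ) + p univ) / (m + 1)) ^ (m + 1) := by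
  set s : Fin (m + 1) → ℝ :=
    fun i => ∑ I ∈ univ.filter (fun I : Finset (Fin (m + 1)) => i ∈ I), p I with hs
  have hsnn : ∀ i, 0 ≤ s i := fun i => Finset.sum_nonneg fun I _ => hp I
  -- sum of s i = ∑_I card I * p I
  have hswap : ∑ i, s i = ∑ I : Finset (Fin (m + 1)), (I.card : ℝ) * p I := by
    simp only [hs, Finset.sum_filter]
    rw [Finset.sum_comm]
    refine Finset.sum_congr rfl fun I _ => ?_
    rw [Finset.sum_ite_mem, Finset.univ_inter, Finset.sum_const, nsmul_eq_mul]
  have hcard : ∀ I : Finset (Fin (m + 1)), (I.card : ℝ) ≤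
      (m : ℝ) + (if I = univ then 1 else 0) := by
    intro I
    by_cases h : I = univ
    · subst h
      rw [if_pos rfl, Finset.card_univ, Fintype.card_fin]
      push_cast; linarith
    · have : I.card < m + 1 := by
        have := Finset.card_lt_card (Finset.ssubset_univ_iff.2 h)
        simpa [Finset.card_univ] using this
      have : (I.card : ℝ) ≤ m := by exact_mod_cast Nat.lt_succ_iff.1 this
      simp [h]; linarith
  have hsumle : ∑ i, s i ≤ (m : ℝ) + p univ := by
    rw [hswap]
    calc ∑ I : Finset (Fin (m + 1)), (I.card : ℝ) * p I
        ≤ ∑ I : Finset (Fin (m + 1)), ((m : ℝ) + if I = univ then 1 else 0) * p I := by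
          refine Finset.sum_le_sum fun I _ => mul_le_mul_of_nonneg_right (hcard I) (hp I)
      _ = (m : ℝ) * (∑ I : Finset (Fin (m + 1)), p I) + p univ := by
          simp [add_mul, Finset.sum_add_distrib, ← Finset.mul_sum, Finset.sum_ite_eq',
            ite_mul]
      _ = (m : ℝ) + p univ := by rw [hsum]; ring
  -- AM-GM
  have hm1 : (0 : ℝ) < (m : ℝ) + 1 := by positivity
  have hamgm := Real.geom_mean_le_arith_mean (Finset.univ : Finset (Fin (m + 1)))
    (fun _ => 1) s (fun _ _ => zero_le_one) (by simpa using hm1) (fun i _ => hsnn i)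
  simp only [Real.rpow_one, one_mul, Finset.sum_const, Finset.card_univ,
    Fintype.card_fin, nsmul_eq_mul, mul_one] at hamgm
  have hprodnn : 0 ≤ ∏ i, s i := Finset.prod_nonneg fun i _ => hsnn i
  have key : ∏ i, s i ≤ ((∑ i, s i) / ((m : ℝ) + 1)) ^ (m + 1) := by
    have h2 : ((∏ i, s i) ^ (((m : ℝ) + 1)⁻¹)) ^ ((m : ℝ) + 1)
        ≤ ((∑ i, s i) / ((m : ℝ) + 1)) ^ ((m : ℝ) + 1) := by
      apply Real.rpow_le_rpow (Real.rpow_nonneg hprodnn _) _ hm1.le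
      convert hamgm using 2 <;> push_cast <;> ring
    rw [← Real.rpow_mul hprodnn, inv_mul_cancel₀ hm1.ne', Real.rpow_one] at h2
    refine h2.trans_eq ?_
    rw [show ((m : ℝ) + 1) = ((m + 1 : ℕ) : ℝ) by push_cast; ring, Real.rpow_natCast]
  refine key.trans ?_
  have hsnn' : 0 ≤ ∑ i, s i := Finset.sum_nonneg fun i _ => hsnn i
  apply pow_le_pow_left₀ (div_nonneg hsnn' hm1.le)
  gcongr
end

section
/- For every k ∈ ℕ and all I, J ∈ Σ with I ≼ J, one has P(𝓘_{2k} = J) ≤ P(𝓘_{2k} = I); that is, the law of 𝓘_{2k} is decreasing with respect to the partial order ≼. -/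
/-!
Write `f_n(V)` for the probability that the parity vector of `n` samples equals `V`, and
`V + eₓ` for `V` with the bit at `x` flipped. Conditioning on the first sample gives
`f_{n+1}(V) = ∑ₓ p x · f_n(V + eₓ)`, and by induction on `n` this shows
`f_n(V) ≤ f_n(V + e_a + e_b)` whenever `V a = 1` and `p a ≤ p b`.

Given `I ≼ J` in `Σ` with `I ≠ J`, such a move with `a < b` leads from `J` to some `J'` in `Σ`
with `I ≼ J'`: at the first position `a` where `I` and `J` differ, `J` has a one. It is moved to
the first later position where `I` has a one and `J` has none or, if there is no such position,
cancelled against the last one of `J`; in that case evenness forces `J` to have at least two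
more ones than `I`. The move strictly lowers the prefix counts of `J`, so iterating it reaches `I`.
-/

open Finset

section ParityLaw

variable {α : Type*} [DecidableEq α]

def toggle (V : α → Bool) (x : α) : α → Bool := Function.update V x (!V x)

@[simp]
theorem toggle_toggle (V : α → Bool) (x : α) : toggle (toggle V x) x = V := by
  simp [toggle]

theorem toggle_comm (V : α → Bool) (x y : α) :
    toggle (toggle V x) y = toggle (toggle V y) x := by
  ext i
  by_cases hx : i = x <;> by_cases hy : i = y <;> simp_all [toggle, Function.update_apply]

theorem toggle_apply_of_ne {V : α → Bool} {x i : α} (h : i ≠ x) : toggle V x i = V i :=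
  Function.update_of_ne h _ _

theorem toggle_eq_iff {V W : α → Bool} {x : α} : toggle V x = W ↔ V = toggle W x := by
  constructor <;> rintro rfl <;> simp

theorem card_filter_toggle (s : Finset α) (V : α → Bool) (x : α) :
    (#{l ∈ s | toggle V x l} : ℤ) =
      #{l ∈ s | V l} + if x ∈ s then (if V x then -1 else 1) else 0 := by
  have hoff : ∀ l ∈ s.erase x, toggle V x l = V l := fun l hl =>
    toggle_apply_of_ne (ne_of_mem_erase hl)
  by_cases hx : x ∈ s
  · rw [if_pos hx, card_filter, card_filter, ← add_sum_erase s _ hx, ← add_sum_erase s _ hx,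
      sum_congr rfl fun l hl => by rw [hoff l hl]]
    cases hVx : V x <;> simp [toggle, hVx, add_comm]
  · rw [if_neg hx, add_zero, filter_congr fun l hl => by
      rw [toggle_apply_of_ne (ne_of_mem_of_not_mem hl hx)]]

theorem card_filter_toggle_toggle (s : Finset α) (V : α → Bool) {a b : α} (hab : a ≠ b) :
    (#{l ∈ s | toggle (toggle V a) b l} : ℤ) = #{l ∈ s | V l} +
      (if a ∈ s then (if V a then -1 else 1) else 0) +
      (if b ∈ s then (if V b then -1 else 1) else 0) := by
  rw [card_filter_toggle, card_filter_toggle, toggle_apply_of_ne hab.symm]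

theorem even_card_toggle_toggle [Fintype α] {V : α → Bool} {a b : α} (hab : a ≠ b)
    (hV : Even #{i | V i}) : Even #{i | toggle (toggle V a) b i} := by
  have := card_filter_toggle_toggle univ V hab
  rw [Nat.even_iff] at hV ⊢
  simp only [mem_univ, if_true] at this
  split_ifs at this <;> omega

def parityVector {n : ℕ} (ξ : Fin n → α) : α → Bool := fun i => decide (Odd #{j | ξ j = i})

theorem parityVector_cons {n : ℕ} (x : α) (ξ : Fin n → α) :
    parityVector (Fin.cons x ξ : Fin (n + 1) → α) = toggle (parityVector ξ) x := by
  ext i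
  by_cases hi : i = x
  · subst hi
    simp [parityVector, toggle, Fin.card_filter_univ_succ, Nat.odd_add_one,
      ← Nat.not_even_iff_odd]
  · simp [parityVector, toggle_apply_of_ne hi, Fin.card_filter_univ_succ, Ne.symm hi]

variable [Fintype α] (p : α → ℝ)

noncomputable def parityLaw (n : ℕ) (V : α → Bool) : ℝ :=
  ∑ ξ : Fin n → α with parityVector ξ = V, ∏ j, p (ξ j)

theorem parityLaw_nonneg (hp : ∀ i, 0 ≤ p i) (n : ℕ) (V : α → Bool) : 0 ≤ parityLaw p n V :=
  sum_nonneg fun _ _ => prod_nonneg fun _ _ => hp _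

theorem parityLaw_zero {V : α → Bool} {a : α} (ha : V a = true) : parityLaw p 0 V = 0 := by
  refine sum_eq_zero fun ξ hξ => absurd ha ?_
  simp [← (mem_filter.mp hξ).2, parityVector]

theorem parityLaw_succ (n : ℕ) (V : α → Bool) :
    parityLaw p (n + 1) V = ∑ x, p x * parityLaw p n (toggle V x) := by
  simp only [parityLaw, sum_filter, mul_sum]
  rw [← (Fin.consEquiv fun _ => α).sum_comp, Fintype.sum_prod_type]
  refine sum_congr rfl fun x _ => sum_congr rfl fun ξ _ => ?_
  simp [Fin.consEquiv, parityVector_cons, toggle_eq_iff, Fin.prod_univ_succ]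

theorem parityLaw_le_toggle_toggle (hp : ∀ i, 0 ≤ p i) {a b : α} (hab : a ≠ b)
    (hpab : p a ≤ p b) (n : ℕ) :
    ∀ V : α → Bool, V a = true → parityLaw p n V ≤ parityLaw p n (toggle (toggle V a) b) := by
  induction n with
  | zero =>
    intro V hV
    rw [parityLaw_zero p hV]
    exact parityLaw_nonneg p hp 0 _
  | succ n ih =>
    intro V hV
    have hpair : parityLaw p n (toggle V b) ≤ parityLaw p n (toggle V a) := by
      simpa only [toggle_comm _ b a, toggle_toggle] using
        ih (toggle V b) (by rwa [toggle_apply_of_ne hab])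
    have hrest : ∀ x ∈ univ \ {a, b}, p x * parityLaw p n (toggle V x) ≤
        p x * parityLaw p n (toggle (toggle (toggle V a) b) x) := by
      intro x hx
      obtain ⟨hxa, hxb⟩ : x ≠ a ∧ x ≠ b := by simpa [not_or] using hx
      rw [toggle_comm _ b, toggle_comm _ a]
      exact mul_le_mul_of_nonneg_left (ih _ (by rwa [toggle_apply_of_ne hxa.symm])) (hp x)
    rw [parityLaw_succ, parityLaw_succ, ← sum_sdiff (subset_univ {a, b}),
      ← sum_sdiff (subset_univ {a, b}), sum_pair hab, sum_pair hab, toggle_toggle,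
      toggle_comm (toggle V a) b a, toggle_toggle]
    -- the terms `x = a` and `x = b` together gain
    -- `(p b - p a) * (parityLaw p n (toggle V a) - parityLaw p n (toggle V b)) ≥ 0`
    nlinarith [sum_le_sum hrest]

end ParityLaw

section PrefixOrder

variable {α : Type*} [LinearOrder α] [LocallyFiniteOrderBot α]

/-- The order `≼` of the paper. -/
def PrefixLE (I J : α → Bool) : Prop := ∀ r, #{l ∈ Iic r | I l} ≤ #{l ∈ Iic r | J l}

theorem card_filter_Iic (V : α → Bool) (a : α) :
    #{l ∈ Iic a | V l} = #{l ∈ Iio a | V l} + if V a then 1 else 0 := by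
  rw [← Iio_insert, filter_insert]
  split_ifs <;> simp [card_insert_of_notMem]

theorem card_filter_Iic_of_le {a r : α} (h : a ≤ r) (V : α → Bool) :
    #{l ∈ Iic r | V l} = #{l ∈ Iic a | V l} + #{l ∈ Iic r | a < l ∧ V l} := by
  rw [← card_filter_add_card_filter_not (s := {l ∈ Iic r | V l}) (· ≤ a)]
  congr 2 <;> ext l <;> simp only [mem_filter, mem_Iic, not_le] <;> grind

theorem card_filter_Iic_add_le_of_imp {I J : α → Bool} {a r : α} (h : a ≤ r)
    (hIJ : ∀ l, a < l → l ≤ r → I l = true → J l = true) :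
    #{l ∈ Iic r | I l} + #{l ∈ Iic a | J l} ≤ #{l ∈ Iic r | J l} + #{l ∈ Iic a | I l} := by
  have : #{l ∈ Iic r | a < l ∧ I l} ≤ #{l ∈ Iic r | a < l ∧ J l} :=
    card_le_card fun l hl => by
      simp only [mem_filter, mem_Iic] at hl ⊢
      exact ⟨hl.1, hl.2.1, hIJ l hl.2.1 hl.1 hl.2.2⟩
  rw [card_filter_Iic_of_le h I, card_filter_Iic_of_le h J]
  omega

theorem prefixLE_toggle_toggle {I J : α → Bool} {a b : α} (hab : a < b) (hJa : J a = true)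
    (hIJ : PrefixLE I J)
    (hmid : ∀ r, a ≤ r → r < b → #{l ∈ Iic r | I l} < #{l ∈ Iic r | J l})
    (htail : ∀ r, b ≤ r → #{l ∈ Iic r | I l} + (if J b then 2 else 0) ≤ #{l ∈ Iic r | J l}) :
    PrefixLE I (toggle (toggle J a) b) := by
  intro r
  have hcount := card_filter_toggle_toggle (Iic r) J hab.ne
  simp only [mem_Iic, hJa, if_true] at hcount
  rcases lt_or_ge r a with hra | har
  · rw [if_neg hra.not_ge, if_neg (hra.trans hab).not_ge] at hcount
    have := hIJ r
    omega
  rcases lt_or_ge r b with hrb | hbr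
  · rw [if_pos har, if_neg hrb.not_ge] at hcount
    have := hmid r har hrb
    omega
  · rw [if_pos har, if_pos hbr] at hcount
    have := htail r hbr
    split_ifs at hcount this <;> omega

theorem prefixLE_toggle_toggle_of_forall_Ioo {I J : α → Bool} {a b : α} (hab : a < b)
    (hJa : J a = true) (hJb : J b = false) (hIJ : PrefixLE I J)
    (hDa : #{l ∈ Iic a | J l} = #{l ∈ Iic a | I l} + 1)
    (hIoo : ∀ l, a < l → l < b → I l = true → J l = true) :
    PrefixLE I (toggle (toggle J a) b) := by
  refine prefixLE_toggle_toggle hab hJa hIJ (fun r har hrb => ?_)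
    fun r _ => by simpa [hJb] using hIJ r
  have := card_filter_Iic_add_le_of_imp har fun l hal hlr => hIoo l hal (hlr.trans_lt hrb)
  omega

variable [Fintype α]

theorem card_filter_Iic_le (V : α → Bool) (r : α) : #{l ∈ Iic r | V l} ≤ #{i | V i} :=
  card_le_card (filter_subset_filter _ (subset_univ _))

theorem sum_card_filter_Iic_toggle_toggle_lt {J : α → Bool} {a b : α} (hab : a < b)
    (hJa : J a = true) :
    ∑ r, #{l ∈ Iic r | toggle (toggle J a) b l} < ∑ r, #{l ∈ Iic r | J l} := by
  have hcount r := card_filter_toggle_toggle (Iic r) J hab.ne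
  simp only [mem_Iic, hJa, if_true] at hcount
  refine sum_lt_sum (fun r _ => ?_) ⟨a, mem_univ a, ?_⟩
  · have := hcount r
    rcases lt_or_ge r a with hra | har
    · rw [if_neg hra.not_ge, if_neg (hra.trans hab).not_ge] at this
      omega
    · rw [if_pos har] at this
      split_ifs at this <;> omega
  · have := hcount a
    rw [if_pos le_rfl, if_neg hab.not_ge] at this
    omega

theorem exists_card_filter_Iic_eq_add_one_of_prefixLE {I J : α → Bool} (hIJ : PrefixLE I J)
    (hne : I ≠ J) : ∃ a, J a = true ∧ #{l ∈ Iic a | J l} = #{l ∈ Iic a | I l} + 1 := by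
  obtain ⟨a, ha, ha_min⟩ := (univ.filter fun i => I i ≠ J i).exists_min_image id
    (let ⟨i, hi⟩ := Function.ne_iff.mp hne; ⟨i, mem_filter.2 ⟨mem_univ _, hi⟩⟩)
  have hIio : #{l ∈ Iio a | I l} = #{l ∈ Iio a | J l} :=
    congr_arg card <| filter_congr fun l hl => by
      rw [not_not.1 fun h => (ha_min l (mem_filter.2 ⟨mem_univ _, h⟩)).not_gt (mem_Iio.1 hl)]
  refine ⟨a, ?_⟩
  have hle := hIJ a
  rw [card_filter_Iic, card_filter_Iic, hIio] at hle ⊢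
  have hIJa := (mem_filter.1 ha).2
  cases hIa : I a <;> cases hJa : J a <;> simp_all

theorem exists_prefixLE_toggle_toggle_of_forall_Ioi {I J : α → Bool} {a : α}
    (hI : Even #{i | I i}) (hJ : Even #{i | J i}) (hJa : J a = true) (hIJ : PrefixLE I J)
    (hDa : #{l ∈ Iic a | J l} = #{l ∈ Iic a | I l} + 1)
    (hIoi : ∀ l, a < l → I l = true → J l = true) :
    ∃ b, a < b ∧ PrefixLE I (toggle (toggle J a) b) := by
  have hD : ∀ r, a ≤ r → #{l ∈ Iic r | I l} < #{l ∈ Iic r | J l} := fun r har => by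
    have := card_filter_Iic_add_le_of_imp har fun l hal _ => hIoi l hal
    omega
  obtain ⟨b, hb, hb_max⟩ := (univ.filter fun i => J i = true).exists_max_image id
    ⟨a, mem_filter.2 ⟨mem_univ _, hJa⟩⟩
  have hJb : J b = true := (mem_filter.1 hb).2
  have hJ_le : ∀ l, J l = true → l ≤ b := fun l hl => hb_max l (mem_filter.2 ⟨mem_univ _, hl⟩)
  have hJ_all : ∀ r, b ≤ r → #{l ∈ Iic r | J l} = #{i | J i} := fun r hbr => by
    congr 1; ext l
    simpa using fun hl => (hJ_le l hl).trans hbr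
  have hI_all : #{l ∈ Iic b | I l} = #{i | I i} := by
    congr 1; ext l
    simp only [mem_filter, mem_Iic, mem_univ, true_and, and_iff_right_iff_imp]
    intro hIl
    rcases le_or_gt l a with hla | hal
    · exact hla.trans (hJ_le a hJa)
    · exact hJ_le l (hIoi l hal hIl)
  have hgap : #{i | I i} + 2 ≤ #{i | J i} := by
    have := hD b (hJ_le a hJa)
    rw [hI_all, hJ_all b le_rfl] at this
    rw [Nat.even_iff] at hI hJ
    omega
  have hab : a < b := (hJ_le a hJa).lt_of_ne fun h => by
    have := hJ_all a h.ge
    have := card_filter_Iic_le I a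
    omega
  refine ⟨b, hab, prefixLE_toggle_toggle hab hJa hIJ (fun r har _ => hD r har) fun r hbr => ?_⟩
  have := hJ_all r hbr
  have := card_filter_Iic_le I r
  simp only [hJb, if_true]
  omega

theorem exists_toggle_toggle_of_prefixLE {I J : α → Bool} (hIJ : PrefixLE I J) (hne : I ≠ J)
    (hI : Even #{i | I i}) (hJ : Even #{i | J i}) :
    ∃ a b, a < b ∧ J a = true ∧ PrefixLE I (toggle (toggle J a) b) := by
  obtain ⟨a, hJa, hDa⟩ := exists_card_filter_Iic_eq_add_one_of_prefixLE hIJ hne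
  by_cases hA : ∃ b, a < b ∧ I b = true ∧ J b = false
  · obtain ⟨b, hb, hb_min⟩ :=
      (univ.filter fun b => a < b ∧ I b = true ∧ J b = false).exists_min_image id
        (let ⟨b, hb⟩ := hA; ⟨b, mem_filter.2 ⟨mem_univ _, hb⟩⟩)
    obtain ⟨hab, -, hJb⟩ := (mem_filter.1 hb).2
    refine ⟨a, b, hab, hJa, prefixLE_toggle_toggle_of_forall_Ioo hab hJa hJb hIJ hDa ?_⟩
    intro l hal hlb hIl
    by_contra hJl
    exact (hb_min l (mem_filter.2 ⟨mem_univ _, hal, hIl, by simpa using hJl⟩)).not_gt hlb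
  · simp only [not_exists, not_and, Bool.not_eq_false] at hA
    obtain ⟨b, hab, hIJ'⟩ := exists_prefixLE_toggle_toggle_of_forall_Ioi hI hJ hJa hIJ hDa hA
    exact ⟨a, b, hab, hJa, hIJ'⟩

theorem parityLaw_le_of_prefixLE {p : α → ℝ} (hp : ∀ i, 0 ≤ p i) (hmono : Monotone p)
    (n : ℕ) {I J : α → Bool} (hI : Even #{i | I i}) (hJ : Even #{i | J i})
    (hIJ : PrefixLE I J) : parityLaw p n J ≤ parityLaw p n I := by
  induction hμ : ∑ r, #{l ∈ Iic r | J l} using Nat.strong_induction_on generalizing J with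
  | _ μ ih =>
  obtain rfl | hne := eq_or_ne I J
  · rfl
  obtain ⟨a, b, hab, hJa, hIJ'⟩ := exists_toggle_toggle_of_prefixLE hIJ hne hI hJ
  calc parityLaw p n J ≤ parityLaw p n (toggle (toggle J a) b) :=
        parityLaw_le_toggle_toggle p hp hab.ne (hmono hab.le) n J hJa
    _ ≤ parityLaw p n I :=
        ih _ (hμ ▸ sum_card_filter_Iic_toggle_toggle_lt hab hJa)
          (even_card_toggle_toggle hab.ne hJ) hIJ' rfl

end PrefixOrder

theorem lemma_3_8_i_general (N : ℕ) (p : Fin (N + 1) → ℝ) (hp : ∀ i, 0 ≤ p i)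
    (hmono : Monotone p)
    (k : ℕ) (I J : Fin (N + 1) → Bool)
    (hI : Even ((univ.filter (fun i => I i = true)).card))
    (hJ : Even ((univ.filter (fun i => J i = true)).card))
    (hIJ : ∀ r : Fin (N + 1),
      ∑ l ∈ Finset.Iic r, (if I l then (1 : ℕ) else 0)
        ≤ ∑ l ∈ Finset.Iic r, (if J l then 1 else 0)) :
    ∑ ξ ∈ univ.filter (fun ξ : Fin (2 * k) → Fin (N + 1) =>
        (fun i => decide (Odd ((univ.filter (fun j => ξ j = i)).card))) = J),
      ∏ j, p (ξ j)
    ≤ ∑ ξ ∈ univ.filter (fun ξ : Fin (2 * k) → Fin (N + 1) =>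
        (fun i => decide (Odd ((univ.filter (fun j => ξ j = i)).card))) = I),
      ∏ j, p (ξ j) :=
  parityLaw_le_of_prefixLE hp hmono (2 * k) hI hJ fun r => by
    simpa only [card_filter] using hIJ r

/-- Lemma 3.8(i): the law of the parity vector `𝓘_{2k}` of the multinomial occupation
numbers (with probabilities `p_0 ≤ … ≤ p_N`, here encoded by the product weight
`∏ j, p (ξ j)` over i.i.d. samples `ξ : Fin (2k) → Fin (N+1)`) is decreasing with
respect to the partial order `≼` on `Σ`:
if `I, J` have an even number of ones and `I ≼ J`, then `P(𝓘_{2k} = J) ≤ P(𝓘_{2k} = I)`. -/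
theorem lemma_3_8_i (N : ℕ) (p : Fin (N + 1) → ℝ) (hp : ∀ i, 0 ≤ p i)
    (hmono : Monotone p) (hsum : ∑ i, p i = 1)
    (k : ℕ) (I J : Fin (N + 1) → Bool)
    (hI : Even ((univ.filter (fun i => I i = true)).card))
    (hJ : Even ((univ.filter (fun i => J i = true)).card))
    (hIJ : ∀ r : Fin (N + 1),
      ∑ l ∈ Finset.Iic r, (if I l then (1 : ℕ) else 0)
        ≤ ∑ l ∈ Finset.Iic r, (if J l then 1 else 0)) :
    ∑ ξ ∈ univ.filter (fun ξ : Fin (2 * k) → Fin (N + 1) =>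
        (fun i => decide (Odd ((univ.filter (fun j => ξ j = i)).card))) = J),
      ∏ j, p (ξ j)
    ≤ ∑ ξ ∈ univ.filter (fun ξ : Fin (2 * k) → Fin (N + 1) =>
        (fun i => decide (Odd ((univ.filter (fun j => ξ j = i)).card))) = I),
      ∏ j, p (ξ j) :=
  lemma_3_8_i_general N p hp hmono k I J hI hJ hIJ
end

section
/- Call a set A ⊆ {0,1}^{N+1} decreasing if J ∈ A and I ≼ J imply I ∈ A. For every k ∈ ℕ and every decreasing set A, P(𝓘_{2k+2} ∈ A) ≤ P(𝓘_{2k} ∈ A). -/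
open Finset

namespace L38

variable {N : ℕ}

/-- Flip (toggle) coordinates `a` and `b` (no-op if `a = b`). -/
def Fl (a b : Fin (N + 1)) (Y : Fin (N + 1) → Bool) : Fin (N + 1) → Bool :=
  fun i => xor (Y i) (xor (decide (i = a)) (decide (i = b)))

/-- Toggle a single coordinate. -/
def Tog (a : Fin (N + 1)) (Y : Fin (N + 1) → Bool) : Fin (N + 1) → Bool :=
  fun i => xor (Y i) (decide (i = a))

def ps (Y : Fin (N + 1) → Bool) (r : Fin (N + 1)) : ℕ :=
  ∑ l ∈ Finset.Iic r, (if Y l then 1 else 0)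

def wt (Y : Fin (N + 1) → Bool) : ℕ := ∑ l, (if Y l then 1 else 0)

def Le (I J : Fin (N + 1) → Bool) : Prop := ∀ r, ps I r ≤ ps J r

def Pev (f : (Fin (N + 1) → Bool) → ℝ) : Prop :=
  ∀ I J, Even (wt I) → Even (wt J) → Le I J → f J ≤ f I

lemma Fl_comm (a b : Fin (N + 1)) (Y : Fin (N + 1) → Bool) : Fl a b Y = Fl b a Y := by
  funext i; simp [Fl, Bool.xor_comm]

lemma Fl_self (a : Fin (N + 1)) (Y : Fin (N + 1) → Bool) : Fl a a Y = Y := by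
  funext i; simp [Fl]

lemma Tog_Tog (a b : Fin (N + 1)) (Y : Fin (N + 1) → Bool) :
    Tog b (Tog a Y) = Fl a b Y := by
  funext i; simp [Fl, Tog, Bool.xor_assoc]

lemma Fl_cancel (x y z : Fin (N + 1)) (Y : Fin (N + 1) → Bool) :
    Fl x y (Fl y z Y) = Fl x z Y := by
  funext i
  simp only [Fl]
  cases Y i <;> cases hx : decide (i = x) <;> cases hy : decide (i = y) <;>
    cases hz : decide (i = z) <;> simp_all

lemma Fl_invol (x y : Fin (N + 1)) (Y : Fin (N + 1) → Bool) :
    Fl x y (Fl x y Y) = Y := by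
  rw [Fl_comm x y (Fl x y Y), Fl_cancel, Fl_self]

lemma Fl_swap (a b c d : Fin (N + 1)) (Y : Fin (N + 1) → Bool) :
    Fl a b (Fl c d Y) = Fl c d (Fl a b Y) := by
  funext i
  simp only [Fl]
  cases Y i <;> cases decide (i = a) <;> cases decide (i = b) <;>
    cases decide (i = c) <;> cases decide (i = d) <;> rfl

lemma Fl_apply_ne (a b : Fin (N + 1)) (Y : Fin (N + 1) → Bool) {i : Fin (N + 1)}
    (ha : i ≠ a) (hb : i ≠ b) : Fl a b Y i = Y i := by
  simp [Fl, ha, hb]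

lemma Fl_apply_left {a b : Fin (N + 1)} (h : a ≠ b) (Y : Fin (N + 1) → Bool) :
    Fl a b Y a = !(Y a) := by
  simp [Fl, h]

lemma Fl_apply_right {a b : Fin (N + 1)} (h : a ≠ b) (Y : Fin (N + 1) → Bool) :
    Fl a b Y b = !(Y b) := by
  simp [Fl, h.symm]


lemma sum_split {c d r : Fin (N + 1)} (h : c ≠ d) (g : Fin (N + 1) → ℕ) :
    ∑ l ∈ Finset.Iic r, g l =
      (∑ l ∈ ((Finset.Iic r).erase c).erase d, g l)
        + (if c ≤ r then g c else 0) + (if d ≤ r then g d else 0) := by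
  by_cases hc : c ≤ r <;> by_cases hd : d ≤ r
  · rw [if_pos hc, if_pos hd]
    have hcm : c ∈ Finset.Iic r := Finset.mem_Iic.2 hc
    have hdm : d ∈ (Finset.Iic r).erase c :=
      Finset.mem_erase.2 ⟨Ne.symm h, Finset.mem_Iic.2 hd⟩
    rw [← Finset.add_sum_erase _ g hcm, ← Finset.add_sum_erase _ g hdm]
    ring
  · rw [if_pos hc, if_neg hd]
    have hcm : c ∈ Finset.Iic r := Finset.mem_Iic.2 hc
    have : ((Finset.Iic r).erase c).erase d = (Finset.Iic r).erase c :=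
      Finset.erase_eq_of_notMem (fun hx => hd (Finset.mem_Iic.1 (Finset.mem_of_mem_erase hx)))
    rw [this, ← Finset.add_sum_erase _ g hcm]; ring
  · rw [if_neg hc, if_pos hd]
    have hdm : d ∈ Finset.Iic r := Finset.mem_Iic.2 hd
    have h1 : (Finset.Iic r).erase c = Finset.Iic r :=
      Finset.erase_eq_of_notMem (fun hx => hc (Finset.mem_Iic.1 hx))
    rw [h1, ← Finset.add_sum_erase _ g hdm]; ring
  · rw [if_neg hc, if_neg hd]
    have h1 : (Finset.Iic r).erase c = Finset.Iic r :=
      Finset.erase_eq_of_notMem (fun hx => hc (Finset.mem_Iic.1 hx))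
    have h2 : (Finset.Iic r).erase d = Finset.Iic r :=
      Finset.erase_eq_of_notMem (fun hx => hd (Finset.mem_Iic.1 hx))
    rw [h1, h2]; ring


lemma ps_flip {c d : Fin (N + 1)} (h : c ≠ d) (Y : Fin (N + 1) → Bool) (r : Fin (N + 1)) :
    ps (Fl c d Y) r + (if c ≤ r then (if Y c then 1 else 0) else 0)
        + (if d ≤ r then (if Y d then 1 else 0) else 0)
      = ps Y r + (if c ≤ r then (if Y c then 0 else 1) else 0)
        + (if d ≤ r then (if Y d then 0 else 1) else 0) := by
  have e1 := sum_split (r := r) h (fun l => if Fl c d Y l then 1 else 0)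
  have e2 := sum_split (r := r) h (fun l => if Y l then 1 else 0)
  have ecore : ∑ l ∈ ((Finset.Iic r).erase c).erase d, (if Fl c d Y l then 1 else 0)
      = ∑ l ∈ ((Finset.Iic r).erase c).erase d, (if Y l then (1:ℕ) else 0) := by
    refine Finset.sum_congr rfl (fun l hl => ?_)
    have hld : l ≠ d := (Finset.mem_erase.1 hl).1
    have hlc : l ≠ c := (Finset.mem_erase.1 (Finset.mem_of_mem_erase hl)).1
    rw [Fl_apply_ne _ _ _ hlc hld]
  rw [ps, ps, e1, e2, ecore, Fl_apply_left h, Fl_apply_right h]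
  by_cases hc : c ≤ r <;> by_cases hd : d ≤ r <;>
    cases hYc : Y c <;> cases hYd : Y d <;> simp [hc, hd] <;> omega


lemma wt_eq (Y : Fin (N + 1) → Bool) : wt Y = ps Y (Fin.last N) := by
  rw [wt, ps]
  congr 1
  ext l
  simp [Fin.le_last]

lemma ev_Fl (a b : Fin (N + 1)) (Y : Fin (N + 1) → Bool) :
    Even (wt (Fl a b Y)) ↔ Even (wt Y) := by
  rcases eq_or_ne a b with rfl | h
  · rw [Fl_self]
  · have h2 := ps_flip h Y (Fin.last N)
    simp only [Fin.le_last, if_true] at h2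
    rw [wt_eq, wt_eq, Nat.even_iff, Nat.even_iff]
    cases hYa : Y a <;> cases hYb : Y b <;> simp [hYa, hYb] at h2 <;> omega

lemma le_flip {c d : Fin (N + 1)} (hcd : c < d) {Y : Fin (N + 1) → Bool}
    (hYc : Y c = false) : Le Y (Fl c d Y) := by
  intro r
  have h := ps_flip (ne_of_lt hcd) Y r
  rw [hYc] at h
  by_cases hc : c ≤ r <;> by_cases hd : d ≤ r
  · cases hYd : Y d <;> rw [hYd] at h <;> simp [hc, hd] at h <;> omega
  · cases hYd : Y d <;> rw [hYd] at h <;> simp [hc, hd] at h <;> omega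
  · exact absurd (le_trans (le_of_lt hcd) hd) hc
  · cases hYd : Y d <;> rw [hYd] at h <;> simp [hc, hd] at h <;> omega

lemma dec_flip {c d : Fin (N + 1)} (hcd : c < d) {Y : Fin (N + 1) → Bool}
    (hYc : Y c = true) :
    (∀ r, ps (Fl c d Y) r ≤ ps Y r) ∧ ps (Fl c d Y) c < ps Y c := by
  constructor
  · intro r
    have h := ps_flip (ne_of_lt hcd) Y r
    rw [hYc] at h
    by_cases hc : c ≤ r <;> by_cases hd : d ≤ r
    · cases hYd : Y d <;> rw [hYd] at h <;> simp [hc, hd] at h <;> omega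
    · cases hYd : Y d <;> rw [hYd] at h <;> simp [hc, hd] at h <;> omega
    · exact absurd (le_trans (le_of_lt hcd) hd) hc
    · cases hYd : Y d <;> rw [hYd] at h <;> simp [hc, hd] at h <;> omega
  · have h := ps_flip (ne_of_lt hcd) Y c
    rw [hYc] at h
    have hd : ¬ d ≤ c := not_le_of_gt hcd
    simp [le_refl, hd] at h
    omega


lemma ps_succ {e d : Fin (N + 1)} (h : (d : ℕ) = (e : ℕ) + 1) (X : Fin (N + 1) → Bool) :
    ps X d = ps X e + (if X d then 1 else 0) := by
  have hIic : Finset.Iic d = insert d (Finset.Iic e) := by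
    ext l
    simp only [Finset.mem_Iic, Finset.mem_insert, Fin.le_def, Fin.ext_iff]
    omega
  have hnd : d ∉ Finset.Iic e := by
    simp only [Finset.mem_Iic, Fin.le_def]
    omega
  rw [ps, hIic, Finset.sum_insert hnd, ps, add_comm]

lemma ps_agree {I J : Fin (N + 1) → Bool} {c : Fin (N + 1)}
    (h : ∀ l, l < c → I l = J l) :
    ps I c + (if J c then 1 else 0) = ps J c + (if I c then 1 else 0) := by
  have hc : c ∈ Finset.Iic c := Finset.mem_Iic.2 le_rfl
  have e1 := Finset.add_sum_erase _ (fun l => if I l then (1:ℕ) else 0) hc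
  have e2 := Finset.add_sum_erase _ (fun l => if J l then (1:ℕ) else 0) hc
  have ecore : ∑ l ∈ (Finset.Iic c).erase c, (if I l then (1:ℕ) else 0)
      = ∑ l ∈ (Finset.Iic c).erase c, (if J l then (1:ℕ) else 0) := by
    refine Finset.sum_congr rfl (fun l hl => ?_)
    have := Finset.mem_erase.1 hl
    rw [h l (lt_of_le_of_ne (Finset.mem_Iic.1 this.2) this.1)]
  rw [ps, ps, ← e1, ← e2, ecore]
  ring

lemma ps_agree_below {I J : Fin (N + 1) → Bool} {c : Fin (N + 1)}
    (h : ∀ l, l < c → I l = J l) : ∀ r, r < c → ps I r = ps J r := by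
  intro r hr
  refine Finset.sum_congr rfl (fun l hl => ?_)
  rw [h l (lt_of_le_of_lt (Finset.mem_Iic.1 hl) hr)]

lemma flip_le_of {c d : Fin (N + 1)} {I J : Fin (N + 1) → Bool} (hcd : c < d)
    (hJc : J c = true) (hJd : J d = false) (hLe : Le I J)
    (hmid : ∀ r, c ≤ r → r < d → ps I r < ps J r) : Le I (Fl c d J) := by
  intro r
  have h := ps_flip (ne_of_lt hcd) J r
  rw [hJc, hJd] at h
  by_cases hc : c ≤ r <;> by_cases hd : d ≤ r
  · simp [hc, hd] at h
    have := hLe r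
    omega
  · simp [hc, hd] at h
    have := hmid r hc (lt_of_not_ge hd)
    omega
  · exact absurd (le_trans (le_of_lt hcd) hd) hc
  · simp [hc, hd] at h
    have := hLe r
    omega

lemma move {I J : Fin (N + 1) → Bool} (hLe : Le I J) (hne : I ≠ J)
    (hevI : Even (wt I)) (hevJ : Even (wt J)) :
    ∃ c d, c < d ∧ J c = true ∧ Le I (Fl c d J) := by
  classical
  have hSd : (Finset.univ.filter (fun i => ¬(I i = J i))).Nonempty := by
    rcases Function.ne_iff.1 hne with ⟨i, hi⟩
    exact ⟨i, by simp [hi]⟩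
  set c := (Finset.univ.filter (fun i => ¬(I i = J i))).min' hSd with hcdef
  have hcmem : ¬ (I c = J c) := by
    have := Finset.min'_mem _ hSd
    rw [← hcdef] at this
    simpa using this
  have hagree : ∀ l, l < c → I l = J l := by
    intro l hl
    by_contra hne'
    exact absurd (Finset.min'_le _ l (by simpa using hne')) (not_le_of_gt hl)
  have hEc := ps_agree hagree
  have hJc : J c = true := by
    have := hLe c
    cases hIc' : I c <;> cases hJc' : J c <;> rw [hIc', hJc'] at hEc hcmem <;>
      simp_all <;> omega
  have hIc : I c = false := by
    have := hLe c
    cases hIc' : I c <;> rw [hIc', hJc] at hEc hcmem <;> simp_all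
  have hstrictc : ps I c < ps J c := by
    rw [hIc, hJc] at hEc
    simp at hEc
    omega
  by_cases hS0 : (Finset.univ.filter (fun r => c < r ∧ ps I r = ps J r)).Nonempty
  · -- case A
    set d := (Finset.univ.filter (fun r => c < r ∧ ps I r = ps J r)).min' hS0 with hddef
    have hdmem : c < d ∧ ps I d = ps J d := by
      have := Finset.min'_mem _ hS0
      rw [← hddef] at this
      simpa using this
    have hmid : ∀ r, c ≤ r → r < d → ps I r < ps J r := by
      intro r h1 h2
      rcases eq_or_lt_of_le h1 with rfl | h'
      · exact hstrictc
      · have hne' : ¬(ps I r = ps J r) := by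
          intro he
          exact absurd (Finset.min'_le _ r (by simp [h', he])) (not_le_of_gt h2)
        exact lt_of_le_of_ne (hLe r) hne'
    have hd1 : 1 ≤ (d : ℕ) := by
      have : (c : ℕ) < (d : ℕ) := hdmem.1
      omega
    have hdN : (d : ℕ) < N + 1 := d.isLt
    set e : Fin (N + 1) := ⟨(d : ℕ) - 1, by omega⟩ with hedef
    have hde : (d : ℕ) = (e : ℕ) + 1 := by simp [hedef]; omega
    have hce : c ≤ e := by
      rw [Fin.le_def]
      have : (c : ℕ) < (d : ℕ) := hdmem.1
      simp [hedef]
      omega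
    have hed : e < d := by
      rw [Fin.lt_def]
      omega
    have h1 := ps_succ hde I
    have h2 := ps_succ hde J
    have hmide := hmid e hce hed
    have hdeq := hdmem.2
    have hJd : J d = false := by
      cases hJd' : J d
      · rfl
      · exfalso
        cases hId' : I d <;> rw [hId'] at h1 <;> rw [hJd'] at h2 <;> simp at h1 h2 <;> omega
    exact ⟨c, d, hdmem.1, hJc, flip_le_of hdmem.1 hJc hJd hLe hmid⟩
  · -- case B
    have hlt : ∀ r, c ≤ r → ps I r < ps J r := by
      intro r hr
      rcases eq_or_lt_of_le hr with rfl | h'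
      · exact hstrictc
      · have hne' : ¬(ps I r = ps J r) := by
          intro he
          exact hS0 ⟨r, by simp [h', he]⟩
        exact lt_of_le_of_ne (hLe r) hne'
    by_cases hB1 : ∃ d, c < d ∧ J d = false
    · obtain ⟨d, hcd, hJd⟩ := hB1
      exact ⟨c, d, hcd, hJc, flip_le_of hcd hJc hJd hLe (fun r h1 _ => hlt r h1)⟩
    · push_neg at hB1
      have hclast : c ≠ Fin.last N := by
        intro hcl
        have hwI := wt_eq I
        have hwJ := wt_eq J
        rw [← hcl] at hwI hwJ
        rw [hIc, hJc] at hEc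
        simp at hEc
        rw [Nat.even_iff] at hevI hevJ
        omega
      have hcd : c < Fin.last N := lt_of_le_of_ne (Fin.le_last c) hclast
      have hJd : J (Fin.last N) = true := by
        have := hB1 (Fin.last N) hcd
        cases h' : J (Fin.last N)
        · exact absurd h' this
        · rfl
      refine ⟨c, Fin.last N, hcd, hJc, ?_⟩
      intro r
      have h := ps_flip (ne_of_lt hcd) J r
      rw [hJc, hJd] at h
      by_cases hc : c ≤ r <;> by_cases hd : Fin.last N ≤ r
      · have hr : r = Fin.last N := le_antisymm (Fin.le_last r) hd
        subst hr
        simp [hc, hd] at h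
        have hstr := hlt _ hc
        have hwI := wt_eq I
        have hwJ := wt_eq J
        rw [Nat.even_iff] at hevI hevJ
        omega
      · simp [hc, hd] at h
        have := hlt r hc
        omega
      · exact absurd (le_trans (le_of_lt hcd) hd) hc
      · simp [hc, hd] at h
        have := hLe r
        omega


variable (p : Fin (N + 1) → ℝ)

def Tg (f : (Fin (N + 1) → Bool) → ℝ) (Y : Fin (N + 1) → Bool) : ℝ :=
  ∑ a, ∑ b, p a * (p b * f (Fl a b Y))

def Tm (f : (Fin (N + 1) → Bool) → ℝ) (I J : Fin (N + 1) → Bool)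
    (a b : Fin (N + 1)) : ℝ :=
  p a * p b * (f (Fl a b I) - f (Fl a b J))

lemma keyStep (hp : ∀ i, 0 ≤ p i) (hmono : Monotone p)
    {f : (Fin (N + 1) → Bool) → ℝ} (hf : Pev f) {c d : Fin (N + 1)} (hcd : c < d)
    {I : Fin (N + 1) → Bool} (hIc : I c = false) (hevI : Even (wt I)) :
    Tg p f (Fl c d I) ≤ Tg p f I := by
  have hcd' : c ≠ d := ne_of_lt hcd
  have hpcd : p c ≤ p d := hmono (le_of_lt hcd)
  set J := Fl c d I with hJ
  have hevJ : Even (wt J) := (ev_Fl c d I).2 hevI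
  have evF : ∀ a b, Even (wt (Fl a b I)) := fun a b => (ev_Fl a b I).2 hevI
  set T := Tm p f I J with hT
  have E1 : ∀ a b, a ≠ c → b ≠ c → 0 ≤ f (Fl a b I) - f (Fl a b J) := by
    intro a b hac hbc
    have h1 : Fl a b J = Fl c d (Fl a b I) := by rw [hJ, Fl_swap]
    have h2 : (Fl a b I) c = false := by
      rw [Fl_apply_ne a b I (Ne.symm hac) (Ne.symm hbc)]; exact hIc
    have h3 := hf (Fl a b I) (Fl c d (Fl a b I)) (evF a b)
      ((ev_Fl c d _).2 (evF a b)) (le_flip hcd h2)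
    rw [h1]; linarith
  have E2 : ∀ b, b ≠ c → b ≠ d → f (Fl b c I) ≤ f (Fl b d I) := by
    intro b hbc hbd
    have h2 : (Fl b d I) c = false := by
      rw [Fl_apply_ne b d I (Ne.symm hbc) hcd']; exact hIc
    have h3 : Fl c d (Fl b d I) = Fl b c I := by
      rw [Fl_comm b d, Fl_cancel c d b, Fl_comm c b]
    have h4 := hf (Fl b d I) (Fl c d (Fl b d I)) (evF b d)
      ((ev_Fl c d _).2 (evF b d)) (le_flip hcd h2)
    rw [h3] at h4; exact h4
  have hfIJ : f J ≤ f I := hf I J hevI hevJ (le_flip hcd hIc)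
  have hJcdI : Fl c d J = I := by rw [hJ, Fl_invol]
  have Tcc : T c c = p c * p c * (f I - f J) := by rw [hT, Tm, Fl_self, Fl_self]
  have Tdd : T d d = p d * p d * (f I - f J) := by rw [hT, Tm, Fl_self, Fl_self]
  have Tcd : T c d = p c * p d * (f J - f I) := by
    rw [hT, Tm, ← hJ, hJcdI]
  have Tdc : T d c = p d * p c * (f J - f I) := by
    rw [hT, Tm, Fl_comm d c I, Fl_comm d c J, hJcdI, ← hJ]
  have Tbc : ∀ b, b ≠ c → b ≠ d →
      T b c + T b d = p b * (p c - p d) * (f (Fl b c I) - f (Fl b d I)) := by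
    intro b hbc hbd
    have h1 : Fl b c J = Fl b d I := by rw [hJ, Fl_cancel b c d]
    have h2 : Fl b d J = Fl b c I := by
      rw [hJ, Fl_comm c d, Fl_cancel b d c]
    rw [hT, Tm, Tm, h1, h2]
    ring
  have Tcb : ∀ b, b ≠ c → b ≠ d →
      T c b + T d b = p b * (p c - p d) * (f (Fl b c I) - f (Fl b d I)) := by
    intro b hbc hbd
    have h1 : Fl c b J = Fl b d I := by
      rw [hJ, Fl_comm c b, Fl_cancel b c d]
    have h2 : Fl d b J = Fl b c I := by
      rw [hJ, Fl_comm d b, Fl_comm c d, Fl_cancel b d c]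
    have h3 : Fl c b I = Fl b c I := Fl_comm c b I
    have h4 : Fl d b I = Fl b d I := Fl_comm d b I
    rw [hT, Tm, Tm, h1, h2, h3, h4]
    ring
  have mixed : ∀ b, b ≠ c → b ≠ d →
      0 ≤ p b * (p c - p d) * (f (Fl b c I) - f (Fl b d I)) := by
    intro b hbc hbd
    have h1 := E2 b hbc hbd
    have h2 := hp b
    have h3 : 0 ≤ (p d - p c) * (f (Fl b d I) - f (Fl b c I)) :=
      mul_nonneg (by linarith) (by linarith)
    nlinarith [mul_nonneg h2 h3]
  set σ : Equiv.Perm (Fin (N + 1)) := Equiv.swap c d with hσ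
  have hσc : σ c = d := Equiv.swap_apply_left c d
  have hσd : σ d = c := Equiv.swap_apply_right c d
  have hσo : ∀ a, a ≠ c → a ≠ d → σ a = a := fun a h1 h2 =>
    Equiv.swap_apply_of_ne_of_ne h1 h2
  have quad : (0:ℝ) ≤ T c c + T d c + T c d + T d d := by
    rw [Tcc, Tdd, Tcd, Tdc]
    nlinarith [mul_nonneg (sq_nonneg (p c - p d)) (sub_nonneg.2 hfIJ)]
  have key : ∀ a b, 0 ≤ T a b + T (σ a) b + T a (σ b) + T (σ a) (σ b) := by
    intro a b
    rcases eq_or_ne a c with hac | hac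
    · rw [hac, hσc]
      rcases eq_or_ne b c with hbc | hbc
      · rw [hbc, hσc]; linarith [quad]
      rcases eq_or_ne b d with hbd | hbd
      · rw [hbd, hσd]; linarith [quad]
      · rw [hσo b hbc hbd]
        have h1 := Tcb b hbc hbd
        have h2 := mixed b hbc hbd
        linarith
    rcases eq_or_ne a d with had | had
    · rw [had, hσd]
      rcases eq_or_ne b c with hbc | hbc
      · rw [hbc, hσc]; linarith [quad]
      rcases eq_or_ne b d with hbd | hbd
      · rw [hbd, hσd]; linarith [quad]
      · rw [hσo b hbc hbd]
        have h1 := Tcb b hbc hbd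
        have h2 := mixed b hbc hbd
        linarith
    · rw [hσo a hac had]
      rcases eq_or_ne b c with hbc | hbc
      · rw [hbc, hσc]
        have h1 := Tbc a hac had
        have h2 := mixed a hac had
        linarith
      rcases eq_or_ne b d with hbd | hbd
      · rw [hbd, hσd]
        have h1 := Tbc a hac had
        have h2 := mixed a hac had
        linarith
      · rw [hσo b hbc hbd]
        have h1 := E1 a b hac hbc
        have h2 : 0 ≤ T a b := by
          rw [hT, Tm]
          exact mul_nonneg (mul_nonneg (hp a) (hp b)) h1
        linarith
  have e1 : ∑ a, ∑ b, T (σ a) b = ∑ a, ∑ b, T a b :=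
    Fintype.sum_bijective σ σ.bijective _ _ (fun x => rfl)
  have e2 : ∑ a, ∑ b, T a (σ b) = ∑ a, ∑ b, T a b :=
    Finset.sum_congr rfl (fun a _ =>
      Fintype.sum_bijective σ σ.bijective _ _ (fun x => rfl))
  have e3 : ∑ a, ∑ b, T (σ a) (σ b) = ∑ a, ∑ b, T a b := by
    have e4 : ∀ a, ∑ b, T (σ a) (σ b) = ∑ b, T (σ a) b := fun a =>
      Fintype.sum_bijective σ σ.bijective _ _ (fun x => rfl)
    rw [Finset.sum_congr rfl (fun a _ => e4 a)]
    exact e1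
  have hOK : (0:ℝ) ≤ ∑ a, ∑ b, (T a b + T (σ a) b + T a (σ b) + T (σ a) (σ b)) :=
    Finset.sum_nonneg fun a _ => Finset.sum_nonneg fun b _ => key a b
  have hexp : ∑ a, ∑ b, (T a b + T (σ a) b + T a (σ b) + T (σ a) (σ b))
      = 4 * (∑ a, ∑ b, T a b) := by
    simp only [Finset.sum_add_distrib]
    rw [e1, e2, e3]
    ring
  have hTpos : (0:ℝ) ≤ ∑ a, ∑ b, T a b := by
    rw [hexp] at hOK
    linarith
  have hdiff : Tg p f I - Tg p f J = ∑ a, ∑ b, T a b := by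
    rw [Tg, Tg, ← Finset.sum_sub_distrib]
    refine Finset.sum_congr rfl fun a _ => ?_
    rw [← Finset.sum_sub_distrib]
    refine Finset.sum_congr rfl fun b _ => ?_
    rw [hT, Tm]
    ring
  linarith


def Phi (J : Fin (N + 1) → Bool) : ℕ := ∑ r, ps J r

lemma phi_dec {c d : Fin (N + 1)} (hcd : c < d) {J : Fin (N + 1) → Bool}
    (hJc : J c = true) : Phi (Fl c d J) < Phi J := by
  obtain ⟨h1, h2⟩ := dec_flip hcd hJc
  exact Finset.sum_lt_sum (fun r _ => h1 r) ⟨c, Finset.mem_univ c, h2⟩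

lemma pev_Tg (hp : ∀ i, 0 ≤ p i) (hmono : Monotone p)
    {f : (Fin (N + 1) → Bool) → ℝ} (hf : Pev f) : Pev (Tg p f) := by
  intro I J hevI hevJ hLe
  suffices H : ∀ m J I, Phi J ≤ m → Even (wt I) → Even (wt J) → Le I J →
      Tg p f J ≤ Tg p f I from H (Phi J) J I le_rfl hevI hevJ hLe
  intro m
  induction m with
  | zero =>
    intro J I hm hevI' hevJ' hLe'
    by_cases h : I = J
    · rw [h]
    · obtain ⟨c, d, hcd, hJc, _⟩ := move hLe' h hevI' hevJ'
      have := phi_dec hcd hJc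
      omega
  | succ m ih =>
    intro J I hm hevI' hevJ' hLe'
    by_cases h : I = J
    · rw [h]
    · obtain ⟨c, d, hcd, hJc, hle'⟩ := move hLe' h hevI' hevJ'
      have hJ'ev : Even (wt (Fl c d J)) := (ev_Fl c d J).2 hevJ'
      have h1 : Tg p f J ≤ Tg p f (Fl c d J) := by
        have hc' : (Fl c d J) c = false := by
          rw [Fl_apply_left (ne_of_lt hcd), hJc]
          rfl
        have hk := keyStep p hp hmono hf hcd hc' hJ'ev
        rwa [Fl_invol] at hk
      have hphi := phi_dec hcd hJc
      have h2 : Tg p f (Fl c d J) ≤ Tg p f I :=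
        ih (Fl c d J) I (by omega) hevI' hJ'ev hle'
      linarith

def Qf (f : (Fin (N + 1) → Bool) → ℝ) (Y : Fin (N + 1) → Bool) : ℝ :=
  ∑ a, p a * f (Tog a Y)

def parityVec {m : ℕ} (ξ : Fin m → Fin (N + 1)) : Fin (N + 1) → Bool :=
  fun i => decide (Odd ((Finset.univ.filter (fun j => ξ j = i)).card))

def Sm (m : ℕ) (f : (Fin (N + 1) → Bool) → ℝ) : ℝ :=
  ∑ ξ : Fin m → Fin (N + 1), (∏ j, p (ξ j)) * f (parityVec ξ)

lemma parityVec_cons {m : ℕ} (x : Fin (N + 1)) (ξ : Fin m → Fin (N + 1)) :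
    parityVec (Fin.cons x ξ) = Tog x (parityVec ξ) := by
  funext i
  simp only [parityVec, Tog]
  have hc : ∀ {k : ℕ} (η : Fin k → Fin (N + 1)),
      ((Finset.univ.filter (fun j => η j = i)).card) = ∑ j, if η j = i then 1 else 0 :=
    fun η => Finset.card_filter _ _
  rw [hc (Fin.cons x ξ), Fin.sum_univ_succ]
  simp only [Fin.cons_zero, Fin.cons_succ]
  rw [← hc ξ]
  rcases eq_or_ne x i with rfl | hxi
  · rw [if_pos rfl]
    have hodd : Odd (1 + ((Finset.univ.filter (fun j => ξ j = x)).card))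
        ↔ ¬ Odd ((Finset.univ.filter (fun j => ξ j = x)).card) := by
      rw [add_comm, Nat.odd_add_one, Nat.not_odd_iff_even]
    rw [decide_eq_decide.2 hodd, decide_not]
    simp
  · rw [if_neg hxi, zero_add]
    have : (decide (i = x)) = false := by simp [Ne.symm hxi]
    rw [this, Bool.xor_false]

lemma Sm_succ (m : ℕ) (f : (Fin (N + 1) → Bool) → ℝ) :
    Sm p (m + 1) f = Sm p m (Qf p f) := by
  rw [Sm]
  rw [← Equiv.sum_comp (Fin.consEquiv (fun _ : Fin (m + 1) => Fin (N + 1)))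
    (fun ξ => (∏ j, p (ξ j)) * f (parityVec ξ))]
  rw [Fintype.sum_prod_type]
  rw [Sm]
  rw [Finset.sum_comm]
  refine Finset.sum_congr rfl fun ξ _ => ?_
  rw [Qf, Finset.mul_sum]
  refine Finset.sum_congr rfl fun x _ => ?_
  have h1 : (Fin.consEquiv (fun _ : Fin (m + 1) => Fin (N + 1))) (x, ξ) = Fin.cons x ξ := rfl
  rw [h1, parityVec_cons]
  rw [Fin.prod_univ_succ]
  simp only [Fin.cons_zero, Fin.cons_succ]
  ring

lemma Qf_Qf (f : (Fin (N + 1) → Bool) → ℝ) : Qf p (Qf p f) = Tg p f := by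
  funext Y
  rw [Qf, Tg]
  refine Finset.sum_congr rfl fun a _ => ?_
  rw [Qf, Finset.mul_sum]
  refine Finset.sum_congr rfl fun b _ => ?_
  rw [Tog_Tog]

lemma Sm_succ2 (m : ℕ) (f : (Fin (N + 1) → Bool) → ℝ) :
    Sm p (m + 2) f = Sm p m (Tg p f) := by
  rw [show m + 2 = (m + 1) + 1 from rfl, Sm_succ, Sm_succ, Qf_Qf]

lemma Sm_zero (f : (Fin (N + 1) → Bool) → ℝ) :
    Sm p 0 f = f (fun _ => false) := by
  rw [Sm]
  have hconst : ∀ ξ : Fin 0 → Fin (N + 1),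
      (∏ j, p (ξ j)) * f (parityVec ξ) = f (fun _ => false) := by
    intro ξ
    have h1 : parityVec ξ = fun _ => false := by
      funext i
      simp [parityVec]
    rw [h1]
    simp
  rw [Finset.sum_congr rfl (fun ξ _ => hconst ξ), Finset.sum_const]
  have : (Finset.univ : Finset (Fin 0 → Fin (N + 1))).card = 1 := by
    simp [Finset.card_univ]
  rw [this, one_smul]


lemma base_bound (hp : ∀ i, 0 ≤ p i) (hsum : ∑ i, p i = 1)
    {f : (Fin (N + 1) → Bool) → ℝ} (hf : Pev f) :
    Tg p f (fun _ => false) ≤ f (fun _ => false) := by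
  set Z : Fin (N + 1) → Bool := fun _ => false with hZ
  have hevZ : Even (wt Z) := by simp [wt, hZ]
  have hfle : ∀ a b, f (Fl a b Z) ≤ f Z := by
    intro a b
    refine hf Z (Fl a b Z) hevZ ((ev_Fl a b Z).2 hevZ) ?_
    intro r
    have : ps Z r = 0 := by simp [ps, hZ]
    rw [this]
    exact Nat.zero_le _
  have hinner : ∀ a, ∑ b, p b * f (Fl a b Z) ≤ f Z := by
    intro a
    calc ∑ b, p b * f (Fl a b Z) ≤ ∑ b, p b * f Z :=
          Finset.sum_le_sum fun b _ => mul_le_mul_of_nonneg_left (hfle a b) (hp b)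
      _ = (∑ b, p b) * f Z := by rw [Finset.sum_mul]
      _ = f Z := by rw [hsum, one_mul]
  calc Tg p f Z = ∑ a, p a * (∑ b, p b * f (Fl a b Z)) := by
        rw [Tg]
        exact Finset.sum_congr rfl fun a _ => by rw [Finset.mul_sum]
    _ ≤ ∑ a, p a * f Z :=
        Finset.sum_le_sum fun a _ => mul_le_mul_of_nonneg_left (hinner a) (hp a)
    _ = (∑ a, p a) * f Z := by rw [Finset.sum_mul]
    _ = f Z := by rw [hsum, one_mul]

lemma main_claim (hp : ∀ i, 0 ≤ p i) (hmono : Monotone p) (hsum : ∑ i, p i = 1) :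
    ∀ k (f : (Fin (N + 1) → Bool) → ℝ), Pev f →
      Sm p (2 * k) (Tg p f) ≤ Sm p (2 * k) f := by
  intro k
  induction k with
  | zero =>
    intro f hf
    simp only [Nat.mul_zero]
    rw [Sm_zero, Sm_zero]
    exact base_bound p hp hsum hf
  | succ k ih =>
    intro f hf
    have h2 : 2 * (k + 1) = 2 * k + 2 := by ring
    rw [h2, Sm_succ2, Sm_succ2]
    exact ih (Tg p f) (pev_Tg p hp hmono hf)


end L38

open L38

/-- Lemma 3.8(ii): if `A` is a decreasing set of `{0,1}`-vectors (with respect to the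
partial order `≼`), then `P(𝓘_{2k+2} ∈ A) ≤ P(𝓘_{2k} ∈ A)`, where `𝓘_k` is the parity
vector of the multinomial occupation numbers of `k` i.i.d. samples with probabilities
`p_0 ≤ … ≤ p_N` (encoded by the product weight `∏ j, p (ξ j)`). -/
theorem lemma_3_8_ii (N : ℕ) (p : Fin (N + 1) → ℝ) (hp : ∀ i, 0 ≤ p i)
    (hmono : Monotone p) (hsum : ∑ i, p i = 1)
    (A : Finset (Fin (N + 1) → Bool))
    (hA : ∀ I J : Fin (N + 1) → Bool, J ∈ A →
      (∀ r : Fin (N + 1),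
        ∑ l ∈ Finset.Iic r, (if I l then (1 : ℕ) else 0)
          ≤ ∑ l ∈ Finset.Iic r, (if J l then 1 else 0)) →
      I ∈ A)
    (k : ℕ) :
    ∑ ξ ∈ univ.filter (fun ξ : Fin (2 * k + 2) → Fin (N + 1) =>
        (fun i => decide (Odd ((univ.filter (fun j => ξ j = i)).card))) ∈ A),
      ∏ j, p (ξ j)
    ≤ ∑ ξ ∈ univ.filter (fun ξ : Fin (2 * k) → Fin (N + 1) =>
        (fun i => decide (Odd ((univ.filter (fun j => ξ j = i)).card))) ∈ A),
      ∏ j, p (ξ j) := by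
  classical
  set f : (Fin (N + 1) → Bool) → ℝ := fun I => if I ∈ A then 1 else 0 with hf
  have hPev : Pev f := by
    intro I J _ _ hLe
    simp only [hf]
    by_cases hJA : J ∈ A
    · have hIA : I ∈ A := hA I J hJA (fun r => hLe r)
      rw [if_pos hJA, if_pos hIA]
    · rw [if_neg hJA]
      split <;> norm_num
  have hconv : ∀ m : ℕ,
      ∑ ξ ∈ univ.filter (fun ξ : Fin m → Fin (N + 1) =>
        (fun i => decide (Odd ((univ.filter (fun j => ξ j = i)).card))) ∈ A),
        ∏ j, p (ξ j) = Sm p m f := by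
    intro m
    rw [Finset.sum_filter, Sm]
    refine Finset.sum_congr rfl fun ξ _ => ?_
    have hq : ((fun i => decide (Odd ((univ.filter (fun j => ξ j = i)).card))) ∈ A)
        = (parityVec ξ ∈ A) := rfl
    simp only [hf, hq]
    by_cases h : parityVec ξ ∈ A
    · rw [if_pos h, if_pos h, mul_one]
    · rw [if_neg h, if_neg h, mul_zero]
  rw [hconv (2 * k + 2), hconv (2 * k), Sm_succ2]
  exact main_claim p hp hmono hsum k f hPev
end

section
/- Fix a real λ > 0 and x ∈ ℤ. With P(S_n = x) := 2^{−n} · |{ε ∈ {−1,1}^n : ε_1 + ⋯ + ε_n = x}| (simple random walk on ℤ), define for k ∈ ℕ the weights a_k := (λ^k / k!) · P(S_k = x) and b_k := ((λ/2)^k / k!) · 1{k ≡ x (mod 2)}. Then for all natural numbers k ≤ l, a_k · b_l ≤ a_l · b_k. -/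
/-!
Write `c n` for the number of `±1` sequences of length `n` summing to `x`. Since such a sum has
the parity of `n`, `c n = 0` unless `n ≡ x (mod 2)`, and therefore `a n = c n * b n` for every `n`.
The inequality becomes `c k * (b k * b l) ≤ c l * (b k * b l)`, which is trivial unless
`k ≡ l ≡ x (mod 2)`; then `b k * b l ≥ 0` because `k + l` is even, and `c k ≤ c l` because
appending the steps `+1, -1` embeds the walks of length `k` into those of length `k + 2`.
-/

open Finset

def walkCount (n : ℕ) (x : ℤ) : ℕ :=
  #{ε : Fin n → Bool | ∑ i, (if ε i then (1 : ℤ) else -1) = x}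

lemma sum_sign_emod_two {n : ℕ} (ε : Fin n → Bool) :
    (∑ i, (if ε i then (1 : ℤ) else -1)) % 2 = (n : ℤ) % 2 := by
  have hstep : ∀ i, (if ε i then (1 : ℤ) else -1) % 2 = 1 := fun i => by cases ε i <;> rfl
  simp [Finset.sum_int_mod, hstep]

lemma walkCount_eq_zero_of_emod_two_ne {n : ℕ} {x : ℤ} (h : (n : ℤ) % 2 ≠ x % 2) :
    walkCount n x = 0 := by
  rw [walkCount, card_eq_zero, filter_eq_empty_iff]
  intro ε _ hsum
  exact h (by rw [← hsum, sum_sign_emod_two])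

lemma walkCount_le_walkCount_add_two (n : ℕ) (x : ℤ) : walkCount n x ≤ walkCount (n + 2) x := by
  apply card_le_card_of_injOn fun ε : Fin n → Bool => Fin.snoc (Fin.snoc ε true) false
  · intro ε hε
    simp only [coe_filter, mem_univ, true_and, Set.mem_ofPred_eq] at hε ⊢
    simp [Fin.sum_univ_castSucc, hε]
  · intro ε _ ε' _ h
    funext i
    simpa using congrFun h i.castSucc.castSucc

lemma walkCount_le_walkCount_of_modEq {k l : ℕ} (x : ℤ) (hkl : k ≤ l) (hmod : k ≡ l [MOD 2]) :
    walkCount k x ≤ walkCount l x := by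
  obtain ⟨m, rfl⟩ : ∃ m, l = k + 2 * m := ⟨(l - k) / 2, by unfold Nat.ModEq at hmod; omega⟩
  induction m with
  | zero => rfl
  | succ m ih =>
    exact (ih (by omega) (by unfold Nat.ModEq; omega)).trans (walkCount_le_walkCount_add_two _ x)

lemma pow_div_factorial_mul_walkCount (r : ℝ) (x : ℤ) (n : ℕ) :
    r ^ n / n.factorial * ((walkCount n x : ℝ) / 2 ^ n) =
      walkCount n x * ((r / 2) ^ n / n.factorial * if (n : ℤ) % 2 = x % 2 then 1 else 0) := by
  split_ifs with h
  · rw [div_pow]; ring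
  · simp [walkCount_eq_zero_of_emod_two_ne h]

lemma pow_div_factorial_mul_pow_div_factorial_nonneg (r : ℝ) {k l : ℕ} (h : Even (k + l)) :
    0 ≤ r ^ k / k.factorial * (r ^ l / l.factorial) := by
  rw [show r ^ k / k.factorial * (r ^ l / l.factorial) = r ^ (k + l) / (k.factorial * l.factorial)
    by rw [pow_add]; ring]
  exact div_nonneg (h.pow_nonneg r) (by positivity)

theorem lemma_3_7_lr_general (lam : ℝ) (x : ℤ)
    (a b : ℕ → ℝ)
    (ha : ∀ n, a n = lam ^ n / n.factorial *
      (((univ.filter (fun ε : Fin n → Bool =>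
        ∑ i, (if ε i then (1 : ℤ) else -1) = x)).card : ℝ) / 2 ^ n))
    (hb : ∀ n, b n = (lam / 2) ^ n / n.factorial *
      (if (n : ℤ) % 2 = x % 2 then 1 else 0))
    (k l : ℕ) (hkl : k ≤ l) :
    a k * b l ≤ a l * b k := by
  have hab : ∀ n, a n = walkCount n x * b n := fun n => by
    rw [ha, hb]; exact pow_div_factorial_mul_walkCount lam x n
  rw [hab, hab]
  by_cases hk : (k : ℤ) % 2 = x % 2
  · by_cases hl : (l : ℤ) % 2 = x % 2
    · have hc : (walkCount k x : ℝ) ≤ walkCount l x :=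
        mod_cast walkCount_le_walkCount_of_modEq x hkl (by unfold Nat.ModEq; omega)
      have hbb : 0 ≤ b k * b l := by
        rw [hb, hb, if_pos hk, if_pos hl, mul_one, mul_one]
        exact pow_div_factorial_mul_pow_div_factorial_nonneg _ (by rw [Nat.even_iff]; omega)
      calc (walkCount k x : ℝ) * b k * b l = walkCount k x * (b k * b l) := by ring
        _ ≤ walkCount l x * (b k * b l) := mul_le_mul_of_nonneg_right hc hbb
        _ = walkCount l x * b l * b k := by ring
    · simp [hb l, hl]
  · simp [hb k, hk]

/-- Likelihood-ratio comparison of Lemma 3.7 (one-dimensional reformulation):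
with `a k = (λ^k/k!) P(S_k = x)` and `b k = ((λ/2)^k/k!) 1{k ≡ x (mod 2)}`,
one has `a k * b l ≤ a l * b k` for all `k ≤ l`. -/
theorem lemma_3_7_lr (lam : ℝ) (hlam : 0 < lam) (x : ℤ)
    (a b : ℕ → ℝ)
    (ha : ∀ n, a n = lam ^ n / n.factorial *
      (((univ.filter (fun ε : Fin n → Bool =>
        ∑ i, (if ε i then (1 : ℤ) else -1) = x)).card : ℝ) / 2 ^ n))
    (hb : ∀ n, b n = (lam / 2) ^ n / n.factorial *
      (if (n : ℤ) % 2 = x % 2 then 1 else 0))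
    (k l : ℕ) (hkl : k ≤ l) :
    a k * b l ≤ a l * b k :=
  lemma_3_7_lr_general lam x a b ha hb k l hkl
end
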